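/- Let K and L be nonempty compact convex sets in ℝⁿ. Then the following are equivalent: (i) for every polytope Q ⊆ K having at most n+1 vertices (i.e., Q is the convex hull of at most n+1 points of K), there exists v ∈ ℝⁿ such that Q + v ⊆ L; (ii) there exists v₀ ∈ ℝⁿ such that K + v₀ ⊆ L. -/

import Mathlib

/-!
Translating `K` into `L` by `v` means that `v` lies in every set `{v | x + v ∈ L}` with `x ∈ K`.
These sets are translates of `L`, hence compact and convex, and hypothesis (i) applied to the
convex hull of `n + 1` points of `K` says that any `n + 1` of them meet. Helly's theorem for
compact convex families then gives a common point.
-/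

open Set

/-- The orthogonal projection of `ℝⁿ` onto a subspace `ξ`, viewed as a map `ℝⁿ → ℝⁿ`. -/
noncomputable def projSub {n : ℕ} (ξ : Submodule ℝ (EuclideanSpace ℝ (Fin n)))
    (x : EuclideanSpace ℝ (Fin n)) : EuclideanSpace ℝ (Fin n) :=
  (Submodule.orthogonalProjection ξ x : EuclideanSpace ℝ (Fin n))

/-- The orthogonal projection of `ℝⁿ` onto the hyperplane `u^⊥`. -/
noncomputable def projHyp {n : ℕ} (u : EuclideanSpace ℝ (Fin n)) :
    EuclideanSpace ℝ (Fin n) → EuclideanSpace ℝ (Fin n) :=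
  projSub ((Submodule.span ℝ {u})ᗮ)

/-- `IsSimplex n Δ` : `Δ` is an `n`-simplex in `ℝⁿ`, i.e. the convex hull of
`n+1` affinely independent points. -/
def IsSimplex (n : ℕ) (Δ : Set (EuclideanSpace ℝ (Fin n))) : Prop :=
  ∃ p : Fin (n + 1) → EuclideanSpace ℝ (Fin n),
    AffineIndependent ℝ p ∧ Δ = convexHull ℝ (Set.range p)

open Module

theorem exists_forall_add_mem_of_forall_finset {𝕜 E : Type*} [Field 𝕜] [LinearOrder 𝕜]
    [IsStrictOrderedRing 𝕜] [AddCommGroup E] [Module 𝕜 E] [FiniteDimensional 𝕜 E]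
    [TopologicalSpace E] [T2Space E] [ContinuousAdd E] {K L : Set E}
    (hLcp : IsCompact L) (hLcv : Convex 𝕜 L)
    (h : ∀ s : Finset E, s.card ≤ finrank 𝕜 E + 1 → ↑s ⊆ K → ∃ v, ∀ x ∈ s, x + v ∈ L) :
    ∃ v, ∀ x ∈ K, x + v ∈ L := by
  classical
  obtain ⟨v, hv⟩ : (⋂ x : K, (x.1 + ·) ⁻¹' L).Nonempty := by
    refine Convex.helly_theorem_compact' (𝕜 := 𝕜) (fun x => hLcv.translate_preimage_right x.1)
      (fun x => (Homeomorph.addLeft x.1).isCompact_preimage.2 hLcp) fun I hI => ?_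
    obtain ⟨v, hv⟩ := h (I.image Subtype.val) (Finset.card_image_le.trans hI) (by simp)
    exact ⟨v, by simpa using fun x hxK hx => hv x (Finset.mem_image_of_mem _ hx)⟩
  exact ⟨v, fun x hx => mem_iInter.1 hv ⟨x, hx⟩⟩

theorem stmt_1_general {n : ℕ} (K L : Set (EuclideanSpace ℝ (Fin n)))
    (hKcv : Convex ℝ K)
    (hLcp : IsCompact L) (hLcv : Convex ℝ L) :
    (∀ Q : Set (EuclideanSpace ℝ (Fin n)),
      (∃ s : Finset (EuclideanSpace ℝ (Fin n)), s.card ≤ n + 1 ∧ ↑s ⊆ K ∧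
        Q = convexHull ℝ (↑s : Set (EuclideanSpace ℝ (Fin n)))) →
      ∃ v : EuclideanSpace ℝ (Fin n), (fun x => x + v) '' Q ⊆ L) ↔
    (∃ v₀ : EuclideanSpace ℝ (Fin n), (fun x => x + v₀) '' K ⊆ L) := by
  constructor
  · intro h
    obtain ⟨v, hv⟩ := exists_forall_add_mem_of_forall_finset (K := K) hLcp hLcv fun s hs hsK => by
      obtain ⟨v, hv⟩ := h _ ⟨s, by simpa [finrank_euclideanSpace_fin] using hs, hsK, rfl⟩
      exact ⟨v, fun x hx => hv (mem_image_of_mem _ (subset_convexHull ℝ _ hx))⟩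
    exact ⟨v, image_subset_iff.2 hv⟩
  · rintro ⟨v₀, hv₀⟩ Q ⟨s, -, hsK, rfl⟩
    exact ⟨v₀, (image_mono (convexHull_min hsK hKcv)).trans hv₀⟩

/-- **Inscribed Polytope Containment Theorem.** -/
theorem stmt_1 {n : ℕ} (hn : 1 ≤ n) (K L : Set (EuclideanSpace ℝ (Fin n)))
    (hKne : K.Nonempty) (hKcp : IsCompact K) (hKcv : Convex ℝ K)
    (hLne : L.Nonempty) (hLcp : IsCompact L) (hLcv : Convex ℝ L) :
    (∀ Q : Set (EuclideanSpace ℝ (Fin n)),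
      (∃ s : Finset (EuclideanSpace ℝ (Fin n)), s.card ≤ n + 1 ∧ ↑s ⊆ K ∧
        Q = convexHull ℝ (↑s : Set (EuclideanSpace ℝ (Fin n)))) →
      ∃ v : EuclideanSpace ℝ (Fin n), (fun x => x + v) '' Q ⊆ L) ↔
    (∃ v₀ : EuclideanSpace ℝ (Fin n), (fun x => x + v₀) '' K ⊆ L) :=
  stmt_1_general K L hKcv hLcp hLcv
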